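/- Let f : X → GL_n(ℂ) be a morphism of algebraic varieties whose image lies in a single Bruhat cell B π B for a permutation π. For any two factorizations f = u₁ π t u₂ = u₁' π t' u₂' with u₁, u₂, u₁', u₂' : X → U regular and t, t' : X → T regular, the 2-forms (u₁ | π t u₂) and (u₁' | π t' u₂') coincide. -/

import Mathlib

attribute [local instance] Matrix.normedAddCommGroup Matrix.normedSpace

/-- For maps `f, g : X → GL_n(ℂ)`, the scalar 2-form `(f|g) = trace(f⁻¹ df ∧ dg g⁻¹)`,
evaluated at a point `x` on a pair of tangent vectors `(v, w)`. -/
noncomputable def pairForm {E : Type*} [NormedAddCommGroup E] [NormedSpace ℂ E] {n : ℕ}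
    (f g : E → Matrix (Fin n) (Fin n) ℂ) (x v w : E) : ℂ :=
  ((f x)⁻¹ * fderiv ℂ f x v * fderiv ℂ g x w * (g x)⁻¹).trace
    - ((f x)⁻¹ * fderiv ℂ f x w * fderiv ℂ g x v * (g x)⁻¹).trace

/-- A matrix is unipotent upper-triangular. -/
def IsUni {n : ℕ} (M : Matrix (Fin n) (Fin n) ℂ) : Prop :=
  M.BlockTriangular (id : Fin n → Fin n) ∧ ∀ i, M i i = 1

/-- A matrix is diagonal and invertible. -/
def IsTor {n : ℕ} (M : Matrix (Fin n) (Fin n) ℂ) : Prop :=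
  (∀ i j, i ≠ j → M i j = 0) ∧ ∀ i, M i i ≠ 0

/-!
Write `ρf = df f⁻¹` and `λf = f⁻¹ df`. For `F = u g` one has `ρF = u (λu + ρg) u⁻¹`, hence
`(u | g)(v, w) = tr(ρu(v) ρF(w)) - tr(ρu(w) ρF(v))`: the form sees `g` only through `F`.
Putting `A = u₁'⁻¹ u₁`, so that `u₁ = u₁' A`, the two forms therefore differ by the
antisymmetrisation of `tr(ρA(v) (λu₁'(w) + ρg'(w)))`, where `g' = π t' u₂'`.
Both traces vanish: `A = π (t' u₂' u₂⁻¹ t⁻¹) π⁻¹` lies in `U ∩ π B π⁻¹`, so `ρA` is strictly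
upper triangular and lies in `π 𝔟 π⁻¹`, while `λu₁'` lies in `𝔟` and `ρg' = π ρ(t' u₂') π⁻¹`
lies in `π 𝔟 π⁻¹`; and the trace of a product of two matrices that are triangular for the
same order vanishes as soon as one of them has zero diagonal.
-/

open Matrix

namespace Matrix

variable {m α R : Type*} [Fintype m] [LinearOrder α] {b : m → α}

theorem BlockTriangular.mul_apply_self [NonUnitalNonAssocSemiring R] {M N : Matrix m m R}
    (hM : M.BlockTriangular b) (hN : N.BlockTriangular b) (hb : Function.Injective b) (i : m) :
    (M * N) i i = M i i * N i i := by
  rw [mul_apply, Finset.sum_eq_single i]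
  · intro k _ hk
    rcases lt_or_gt_of_ne (hb.ne hk) with h | h
    · rw [hM h, zero_mul]
    · rw [hN h, mul_zero]
  · exact fun h => absurd (Finset.mem_univ i) h

theorem BlockTriangular.trace_mul_eq_zero [NonUnitalNonAssocSemiring R] {M N : Matrix m m R}
    (hM : M.BlockTriangular b) (hN : N.BlockTriangular b) (hb : Function.Injective b)
    (hM₀ : ∀ i, M i i = 0) : (M * N).trace = 0 :=
  Finset.sum_eq_zero fun i _ => by
    rw [diag_apply, hM.mul_apply_self hN hb, hM₀, zero_mul]

variable [DecidableEq m] [CommRing R]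

theorem BlockTriangular.nonsing_inv {M : Matrix m m R} (hM : M.BlockTriangular b) :
    M⁻¹.BlockTriangular b := by
  by_cases h : IsUnit M.det
  · let := M.invertibleOfIsUnitDet h
    exact blockTriangular_inv_of_blockTriangular hM
  · rw [nonsing_inv_apply_not_isUnit M h]
    exact blockTriangular_zero

theorem pow_card_eq_zero_of_isUpperTriangular [LinearOrder m] {N : Matrix m m R}
    (hN : N.IsUpperTriangular) (hN₀ : ∀ i, N i i = 0) : N ^ Fintype.card m = 0 := by
  simpa [charpoly_of_isUpperTriangular N hN, hN₀] using aeval_self_charpoly N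

theorem inv_eq_geom_sum_one_sub [LinearOrder m] {M : Matrix m m R}
    (hM : M.IsUpperTriangular) (hM₁ : ∀ i, M i i = 1) :
    M⁻¹ = ∑ k ∈ Finset.range (Fintype.card m), (1 - M) ^ k := by
  apply inv_eq_left_inv
  have hN : (1 - M).IsUpperTriangular := blockTriangular_one.sub hM
  have hnil := pow_card_eq_zero_of_isUpperTriangular hN (by simp [hM₁])
  simpa [hnil] using geom_sum_mul_neg (1 - M) (Fintype.card m)

theorem trace_conj_mul_conj {M : Matrix m m R} (hM : IsUnit M.det) (X Y : Matrix m m R) :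
    (M * X * M⁻¹ * (M * Y * M⁻¹)).trace = (X * Y).trace := by
  rw [← trace_conj ((isUnit_iff_isUnit_det M).2 hM) (X * Y)]
  simp only [Matrix.mul_assoc, nonsing_inv_mul_cancel_left _ _ hM]

theorem permMatrix_mul_permMatrix_inv (σ : Equiv.Perm m) :
    σ.permMatrix R * (σ⁻¹).permMatrix R = 1 := by
  rw [← permMatrix_mul, inv_mul_cancel, permMatrix_one]

theorem isUnit_det_permMatrix (σ : Equiv.Perm m) : IsUnit (σ.permMatrix R).det :=
  isUnit_det_of_right_inverse (permMatrix_mul_permMatrix_inv σ)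

theorem permMatrix_mul_mul_inv (σ : Equiv.Perm m) (M : Matrix m m R) :
    σ.permMatrix R * M * (σ.permMatrix R)⁻¹ = M.submatrix σ σ := by
  rw [inv_eq_right_inv (permMatrix_mul_permMatrix_inv σ), PEquiv.toMatrix_toPEquiv_mul,
    PEquiv.mul_toMatrix_toPEquiv]
  rfl

theorem inv_mul_eq_submatrix_of_mul_permMatrix_mul_eq (σ : Equiv.Perm m)
    {u₁ u h₁ h : Matrix m m R} (hu : IsUnit u.det) (hh₁ : IsUnit h₁.det)
    (heq : u₁ * σ.permMatrix R * h₁ = u * σ.permMatrix R * h) :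
    u⁻¹ * u₁ = (h * h₁⁻¹).submatrix σ σ := by
  have hP := isUnit_det_permMatrix (R := R) σ
  calc u⁻¹ * u₁ = u⁻¹ * (u₁ * σ.permMatrix R * h₁) * h₁⁻¹ * (σ.permMatrix R)⁻¹ := by
        simp only [Matrix.mul_assoc, mul_nonsing_inv_cancel_left _ _ hh₁,
          mul_nonsing_inv _ hP, Matrix.mul_one]
    _ = σ.permMatrix R * (h * h₁⁻¹) * (σ.permMatrix R)⁻¹ := by
        rw [heq]
        simp only [Matrix.mul_assoc, nonsing_inv_mul_cancel_left _ _ hu]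
    _ = (h * h₁⁻¹).submatrix σ σ := permMatrix_mul_mul_inv σ _

end Matrix

section Calculus

variable {𝕜 E m α : Type*} [NontriviallyNormedField 𝕜] [NormedAddCommGroup E] [NormedSpace 𝕜 E]
  [Fintype m] {f g : E → Matrix m m 𝕜} {x : E}

theorem fderiv_apply_apply_eq_zero {i j : m} {c : 𝕜} (h : ∀ y, f y i j = c) (v : E) :
    fderiv 𝕜 f x v i j = 0 := by
  by_cases hf : DifferentiableAt 𝕜 f x
  · have hij := fderiv_apply (differentiableAt_pi.1 hf i) j
    rw [fderiv_apply hf i, funext h, fderiv_fun_const] at hij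
    exact (congrArg (· v) hij).symm
  · simp [fderiv_zero_of_not_differentiableAt hf]

theorem blockTriangular_fderiv [LT α] {b : m → α} (h : ∀ y, (f y).BlockTriangular b) (v : E) :
    (fderiv 𝕜 f x v).BlockTriangular b :=
  fun _ _ hij => fderiv_apply_apply_eq_zero (fun y => h y hij) v

variable [CompleteSpace 𝕜]

-- The matrix norm in force is the entrywise sup norm, which is not a normed-ring norm, so
-- products are differentiated through multiplication as a continuous bilinear map.
variable (𝕜 m) in
noncomputable def matrixMulCLM : Matrix m m 𝕜 →L[𝕜] Matrix m m 𝕜 →L[𝕜] Matrix m m 𝕜 :=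
  LinearMap.toContinuousLinearMap
    (LinearMap.toContinuousLinearMap.toLinearMap ∘ₗ LinearMap.mul 𝕜 (Matrix m m 𝕜))

theorem hasFDerivAt_matrix_mul (hf : DifferentiableAt 𝕜 f x) (hg : DifferentiableAt 𝕜 g x) :
    HasFDerivAt (fun y => f y * g y)
      ((matrixMulCLM 𝕜 m).precompR E (f x) (fderiv 𝕜 g x)
        + (matrixMulCLM 𝕜 m).precompL E (fderiv 𝕜 f x) (g x)) x :=
  (matrixMulCLM 𝕜 m).hasFDerivAt_of_bilinear hf.hasFDerivAt hg.hasFDerivAt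

theorem DifferentiableAt.matrix_mul (hf : DifferentiableAt 𝕜 f x) (hg : DifferentiableAt 𝕜 g x) :
    DifferentiableAt 𝕜 (fun y => f y * g y) x :=
  (hasFDerivAt_matrix_mul hf hg).differentiableAt

theorem Differentiable.matrix_mul (hf : Differentiable 𝕜 f) (hg : Differentiable 𝕜 g) :
    Differentiable 𝕜 (fun y => f y * g y) :=
  fun x => (hf x).matrix_mul (hg x)

theorem fderiv_matrix_mul (hf : DifferentiableAt 𝕜 f x) (hg : DifferentiableAt 𝕜 g x) (v : E) :
    fderiv 𝕜 (fun y => f y * g y) x v = fderiv 𝕜 f x v * g x + f x * fderiv 𝕜 g x v :=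
  (congrArg (· v) (hasFDerivAt_matrix_mul hf hg).fderiv).trans (add_comm _ _)

theorem Differentiable.matrix_pow [DecidableEq m] (hf : Differentiable 𝕜 f) (k : ℕ) :
    Differentiable 𝕜 (fun y => f y ^ k) := by
  induction k with
  | zero => simp
  | succ k ih => simpa only [pow_succ] using ih.matrix_mul hf

theorem Differentiable.matrix_inv_of_unitriangular [LinearOrder m] [DecidableEq m]
    (hf : Differentiable 𝕜 f) (hU : ∀ y, (f y).IsUpperTriangular) (h₁ : ∀ y i, f y i i = 1) :
    Differentiable 𝕜 (fun y => (f y)⁻¹) := by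
  simp only [fun y => Matrix.inv_eq_geom_sum_one_sub (hU y) (h₁ y)]
  exact Differentiable.fun_sum fun k _ => ((differentiable_const 1).sub hf).matrix_pow k

end Calculus

section LogDeriv

variable {𝕜 E m : Type*} [NontriviallyNormedField 𝕜] [NormedAddCommGroup E] [NormedSpace 𝕜 E]
  [Fintype m] [DecidableEq m] {f g : E → Matrix m m 𝕜} {x : E}

noncomputable def rightLogDeriv (f : E → Matrix m m 𝕜) (x v : E) : Matrix m m 𝕜 :=
  fderiv 𝕜 f x v * (f x)⁻¹

noncomputable def leftLogDeriv (f : E → Matrix m m 𝕜) (x v : E) : Matrix m m 𝕜 :=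
  (f x)⁻¹ * fderiv 𝕜 f x v

theorem rightLogDeriv_eq_conj_leftLogDeriv (hf : IsUnit (f x).det) (v : E) :
    rightLogDeriv f x v = f x * leftLogDeriv f x v * (f x)⁻¹ := by
  rw [rightLogDeriv, leftLogDeriv, mul_nonsing_inv_cancel_left _ _ hf]

theorem rightLogDeriv_mul [CompleteSpace 𝕜] (hf : DifferentiableAt 𝕜 f x)
    (hg : DifferentiableAt 𝕜 g x) (hf' : IsUnit (f x).det) (hg' : IsUnit (g x).det) (v : E) :
    rightLogDeriv (fun y => f y * g y) x v
      = f x * (leftLogDeriv f x v + rightLogDeriv g x v) * (f x)⁻¹ := by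
  simp only [rightLogDeriv, leftLogDeriv, fderiv_matrix_mul hf hg, Matrix.mul_inv_rev, add_mul,
    mul_add, Matrix.mul_assoc, mul_nonsing_inv_cancel_left _ _ hf',
    mul_nonsing_inv_cancel_left _ _ hg']

theorem rightLogDeriv_const_mul [CompleteSpace 𝕜] (M : Matrix m m 𝕜) (hM : IsUnit M.det)
    (hg : DifferentiableAt 𝕜 g x) (hg' : IsUnit (g x).det) (v : E) :
    rightLogDeriv (fun y => M * g y) x v = M * rightLogDeriv g x v * M⁻¹ := by
  rw [rightLogDeriv_mul (differentiableAt_const M) hg hM hg']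
  simp [leftLogDeriv]

variable {α : Type*} [LinearOrder α] {b : m → α}

theorem blockTriangular_rightLogDeriv (h : ∀ y, (f y).BlockTriangular b) (v : E) :
    (rightLogDeriv f x v).BlockTriangular b :=
  (blockTriangular_fderiv h v).mul (h x).nonsing_inv

theorem blockTriangular_leftLogDeriv (h : ∀ y, (f y).BlockTriangular b) (v : E) :
    (leftLogDeriv f x v).BlockTriangular b :=
  (h x).nonsing_inv.mul (blockTriangular_fderiv h v)

theorem rightLogDeriv_apply_self_of_unitriangular [LinearOrder m]
    (hU : ∀ y, (f y).IsUpperTriangular) (h₁ : ∀ y i, f y i i = 1) (v : E) (i : m) :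
    rightLogDeriv f x v i i = 0 := by
  rw [rightLogDeriv, (blockTriangular_fderiv hU v).mul_apply_self (hU x).nonsing_inv
    Function.injective_id, fderiv_apply_apply_eq_zero (fun y => h₁ y i), zero_mul]

end LogDeriv

section Unitriangular

variable {n : ℕ} {M N : Matrix (Fin n) (Fin n) ℂ}

theorem IsUni.isUnit_det (h : IsUni M) : IsUnit M.det := by
  simp [det_of_isUpperTriangular h.1, h.2]

theorem IsUni.mul (hM : IsUni M) (hN : IsUni N) : IsUni (M * N) :=
  ⟨hM.1.mul hN.1, fun i => by
    rw [hM.1.mul_apply_self hN.1 Function.injective_id, hM.2, hN.2, one_mul]⟩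

theorem IsUni.inv (hM : IsUni M) : IsUni M⁻¹ := by
  refine ⟨hM.1.nonsing_inv, fun i => ?_⟩
  have h := hM.1.nonsing_inv.mul_apply_self hM.1 Function.injective_id i
  rwa [nonsing_inv_mul _ hM.isUnit_det, one_apply_eq, hM.2, mul_one, eq_comm] at h

theorem IsTor.isUpperTriangular (h : IsTor M) : M.IsUpperTriangular :=
  fun i j hij => h.1 i j hij.ne'

theorem IsTor.isUnit_det (h : IsTor M) : IsUnit M.det := by
  simpa [det_of_isUpperTriangular h.isUpperTriangular, Finset.prod_ne_zero_iff] using h.2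

end Unitriangular

section PairForm

variable {E : Type*} [NormedAddCommGroup E] [NormedSpace ℂ E] {n : ℕ}

theorem pairForm_eq_trace_logDeriv (u g : E → Matrix (Fin n) (Fin n) ℂ) (x v w : E) :
    pairForm u g x v w = (leftLogDeriv u x v * rightLogDeriv g x w).trace
      - (leftLogDeriv u x w * rightLogDeriv g x v).trace := by
  simp only [pairForm, leftLogDeriv, rightLogDeriv, Matrix.mul_assoc]

theorem pairForm_eq_trace_rightLogDeriv {u g : E → Matrix (Fin n) (Fin n) ℂ} {x : E}
    (hu : DifferentiableAt ℂ u x) (hg : DifferentiableAt ℂ g x)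
    (hu' : IsUnit (u x).det) (hg' : IsUnit (g x).det) (v w : E) :
    pairForm u g x v w
      = (rightLogDeriv u x v * rightLogDeriv (fun y => u y * g y) x w).trace
        - (rightLogDeriv u x w * rightLogDeriv (fun y => u y * g y) x v).trace := by
  have key : ∀ v w, (rightLogDeriv u x v * rightLogDeriv (fun y => u y * g y) x w).trace
      = (leftLogDeriv u x v * leftLogDeriv u x w).trace
        + (leftLogDeriv u x v * rightLogDeriv g x w).trace := fun v w => by
    rw [rightLogDeriv_eq_conj_leftLogDeriv hu', rightLogDeriv_mul hu hg hu' hg',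
      trace_conj_mul_conj hu', mul_add, trace_add]
  rw [key, key, pairForm_eq_trace_logDeriv,
    trace_mul_comm (leftLogDeriv u x w) (leftLogDeriv u x v)]
  ring

theorem pairForm_eq_of_mul_eq {u₁ g₁ u g : E → Matrix (Fin n) (Fin n) ℂ} {x : E}
    (hu₁ : DifferentiableAt ℂ u₁ x) (hg₁ : DifferentiableAt ℂ g₁ x)
    (hu : DifferentiableAt ℂ u x) (hg : DifferentiableAt ℂ g x)
    (hA : DifferentiableAt ℂ (fun y => (u y)⁻¹ * u₁ y) x)
    (hu₁' : IsUnit (u₁ x).det) (hg₁' : IsUnit (g₁ x).det)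
    (hu' : ∀ y, IsUnit (u y).det) (hg' : IsUnit (g x).det)
    (hF : ∀ y, u₁ y * g₁ y = u y * g y)
    (htr : ∀ v w, (rightLogDeriv (fun y => (u y)⁻¹ * u₁ y) x v
      * (leftLogDeriv u x w + rightLogDeriv g x w)).trace = 0)
    (v w : E) : pairForm u₁ g₁ x v w = pairForm u g x v w := by
  set A := fun y => (u y)⁻¹ * u₁ y
  have hu₁A : u₁ = fun y => u y * A y :=
    funext fun y => (mul_nonsing_inv_cancel_left _ _ (hu' y)).symm
  have hA' : IsUnit (A x).det := by
    simpa only [A, det_mul] using (isUnit_nonsing_inv_det _ (hu' x)).mul hu₁'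
  have key : ∀ v w, (rightLogDeriv u₁ x v * rightLogDeriv (fun y => u y * g y) x w).trace
      = (rightLogDeriv u x v * rightLogDeriv (fun y => u y * g y) x w).trace := fun v w => by
    rw [hu₁A, rightLogDeriv_mul hu hA (hu' x) hA', rightLogDeriv_eq_conj_leftLogDeriv (hu' x),
      rightLogDeriv_mul hu hg (hu' x) hg', trace_conj_mul_conj (hu' x),
      trace_conj_mul_conj (hu' x), add_mul, trace_add, htr, add_zero]
  rw [pairForm_eq_trace_rightLogDeriv hu₁ hg₁ hu₁' hg₁', funext hF,
    pairForm_eq_trace_rightLogDeriv hu hg (hu' x) hg', key, key]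

theorem pairForm_eq_of_bruhat {u₁ u h₁ h : E → Matrix (Fin n) (Fin n) ℂ} (π : Equiv.Perm (Fin n))
    (hu₁ : Differentiable ℂ u₁) (hu : Differentiable ℂ u)
    (hh₁ : Differentiable ℂ h₁) (hh : Differentiable ℂ h)
    (hu₁U : ∀ y, IsUni (u₁ y)) (huU : ∀ y, IsUni (u y))
    (hh₁B : ∀ y, (h₁ y).IsUpperTriangular) (hhB : ∀ y, (h y).IsUpperTriangular)
    (hh₁' : ∀ y, IsUnit (h₁ y).det) (hh' : ∀ y, IsUnit (h y).det)
    (hf : ∀ y, u₁ y * π.permMatrix ℂ * h₁ y = u y * π.permMatrix ℂ * h y) (x v w : E) :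
    pairForm u₁ (fun y => π.permMatrix ℂ * h₁ y) x v w
      = pairForm u (fun y => π.permMatrix ℂ * h y) x v w := by
  set P := π.permMatrix ℂ
  have hP : IsUnit P.det := isUnit_det_permMatrix π
  set A := fun y => (u y)⁻¹ * u₁ y
  have hAU : ∀ y, IsUni (A y) := fun y => (huU y).inv.mul (hu₁U y)
  -- `BlockTriangular π` is membership in `π B π⁻¹`, by `permMatrix_mul_mul_inv`.
  have hAπ : ∀ y, (A y).BlockTriangular π := fun y => by
    change ((u y)⁻¹ * u₁ y).BlockTriangular π
    rw [inv_mul_eq_submatrix_of_mul_permMatrix_mul_eq π (huU y).isUnit_det (hh₁' y) (hf y)]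
    exact ((hhB y).mul (hh₁B y).nonsing_inv).submatrix
  have hgπ : ∀ w, (rightLogDeriv (fun y => P * h y) x w).BlockTriangular π := fun w => by
    rw [rightLogDeriv_const_mul P hP (hh x) (hh' x), permMatrix_mul_mul_inv]
    exact (blockTriangular_rightLogDeriv hhB w).submatrix
  have hA₀ : ∀ v i, rightLogDeriv A x v i i = 0 :=
    rightLogDeriv_apply_self_of_unitriangular (fun y => (hAU y).1) (fun y => (hAU y).2)
  have hAdiff : Differentiable ℂ A :=
    (hu.matrix_inv_of_unitriangular (fun y => (huU y).1) (fun y => (huU y).2)).matrix_mul hu₁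
  refine pairForm_eq_of_mul_eq (hu₁ x) ((differentiable_const P).matrix_mul hh₁ x) (hu x)
    ((differentiable_const P).matrix_mul hh x) (hAdiff x)
    (hu₁U x).isUnit_det (by rw [det_mul]; exact hP.mul (hh₁' x)) (fun y => (huU y).isUnit_det)
    (by rw [det_mul]; exact hP.mul (hh' x)) (fun y => by simpa only [Matrix.mul_assoc] using hf y)
    (fun v w => ?_) v w
  rw [mul_add, trace_add,
    (blockTriangular_rightLogDeriv (fun y => (hAU y).1) v).trace_mul_eq_zero
      (blockTriangular_leftLogDeriv (fun y => (huU y).1) w) Function.injective_id (hA₀ v),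
    (blockTriangular_rightLogDeriv hAπ v).trace_mul_eq_zero (hgπ w) π.injective (hA₀ v), add_zero]

end PairForm

/-- If a map `f : X → GL_n(ℂ)` into the Bruhat cell `B π B` is factored in two ways as
`u₁ π t u₂ = u₁' π t' u₂'` with `u₁, u₂, u₁', u₂'` valued in `U` and `t, t'` valued in
`T`, then the 2-forms `(u₁ | π t u₂)` and `(u₁' | π t' u₂')` coincide. -/
theorem stmt_7 {E : Type*} [NormedAddCommGroup E] [NormedSpace ℂ E] {n : ℕ}
    (π : Equiv.Perm (Fin n))
    (u₁ u₂ u₁' u₂' t t' : E → Matrix (Fin n) (Fin n) ℂ)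
    (hu₁ : Differentiable ℂ u₁) (hu₂ : Differentiable ℂ u₂)
    (hu₁' : Differentiable ℂ u₁') (hu₂' : Differentiable ℂ u₂')
    (ht : Differentiable ℂ t) (ht' : Differentiable ℂ t')
    (hu₁v : ∀ x, IsUni (u₁ x)) (hu₂v : ∀ x, IsUni (u₂ x))
    (hu₁'v : ∀ x, IsUni (u₁' x)) (hu₂'v : ∀ x, IsUni (u₂' x))
    (htv : ∀ x, IsTor (t x)) (ht'v : ∀ x, IsTor (t' x))
    (hfact : ∀ x, u₁ x * π.permMatrix ℂ * t x * u₂ x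
      = u₁' x * π.permMatrix ℂ * t' x * u₂' x) :
    ∀ x v w : E,
      pairForm u₁ (fun y => π.permMatrix ℂ * t y * u₂ y) x v w
        = pairForm u₁' (fun y => π.permMatrix ℂ * t' y * u₂' y) x v w := by
  intro x v w
  have hassoc : ∀ s r : E → Matrix (Fin n) (Fin n) ℂ,
      (fun y => π.permMatrix ℂ * s y * r y) = fun y => π.permMatrix ℂ * (s y * r y) :=
    fun _ _ => funext fun _ => Matrix.mul_assoc _ _ _
  rw [hassoc, hassoc]
  exact pairForm_eq_of_bruhat π hu₁ hu₁' (ht.matrix_mul hu₂) (ht'.matrix_mul hu₂') hu₁v hu₁'v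
    (fun y => (htv y).isUpperTriangular.mul (hu₂v y).1)
    (fun y => (ht'v y).isUpperTriangular.mul (hu₂'v y).1)
    (fun y => by rw [det_mul]; exact (htv y).isUnit_det.mul (hu₂v y).isUnit_det)
    (fun y => by rw [det_mul]; exact (ht'v y).isUnit_det.mul (hu₂'v y).isUnit_det)
    (fun y => by simpa only [Matrix.mul_assoc] using hfact y) x v w
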